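/- Given any integer n ≥ 2 (prime or composite), d ≥ 1, α > 1, positive weights γ with γ_∅ = 1, M > 0, and any generating vector z ∈ U_n^d, the quantity sum(T) satisfies sum(T) ≤ M · |A_d(M)| · S_{n,d,α,γ}(z). -/

import Mathlib

open Finset

noncomputable section

/-- `zetaR x = Σ_{h ≥ 1} h^{-x}`, the Riemann zeta function on reals. -/
def zetaR (x : ℝ) : ℝ := ∑' n : ℕ+, (n : ℝ) ^ (-x)

/-- `Un n = {z ∈ ℤ : 1 ≤ z ≤ n-1, gcd(z,n) = 1}`. -/
def Un (n : ℕ) : Finset ℕ := (Finset.range n).filter fun z => 1 ≤ z ∧ Nat.gcd z n = 1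

/-- The support of an integer vector. -/
def supp {k : ℕ} (h : Fin k → ℤ) : Finset (Fin k) := Finset.univ.filter fun j => h j ≠ 0

/-- `r'(h) = ∏_{j ∈ supp h} |h_j|^α`. -/
def rp {k : ℕ} (α : ℝ) (h : Fin k → ℤ) : ℝ := ∏ j ∈ supp h, |(h j : ℝ)| ^ α

/-- `r_{d,α,γ}(h) = (1/γ_{supp h}) ∏_{j ∈ supp h} |h_j|^α`. -/
def rK {k : ℕ} (α : ℝ) (γ : Finset (Fin k) → ℝ) (h : Fin k → ℤ) : ℝ := rp α h / γ (supp h)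

/-- `ℓ · z ≡ 0 (mod n)`. -/
def dotMod (n : ℕ) {k : ℕ} (ℓ : Fin k → ℤ) (z : Fin k → ℕ) : Prop :=
  (n : ℤ) ∣ ∑ j, ℓ j * (z j : ℤ)

/-- The search criterion `S_{n,d,α,γ}(z)`. -/
def Sq (n : ℕ) {k : ℕ} (α : ℝ) (γ : Finset (Fin k) → ℝ) (z : Fin k → ℕ) : ℝ :=
  ∑' h : Fin k → ℤ, (1 / rK α γ h) *
    ∑' ℓ : {ℓ : Fin k → ℤ // ℓ ≠ 0 ∧ dotMod n ℓ z}, 1 / rK α γ (h + ℓ.1)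

/-- `θ_{n,s+1,α}(z; β)`. -/
def theta (n : ℕ) (α : ℝ) {s : ℕ} (z : Fin (s+1) → ℕ) (β : Finset (Fin (s+1)) → ℝ) : ℝ :=
  ∑' h : Fin (s+1) → ℤ,
    ∑' ℓ : {ℓ : Fin (s+1) → ℤ // ℓ (Fin.last s) ≠ 0 ∧ dotMod n ℓ z},
      (β (supp h) / rp α h) * (β (supp (h + ℓ.1)) / rp α (h + ℓ.1))

/-- `T_{n,d,s+1,α,γ}(z_1,…,z_{s+1})`. -/
def Tcrit (n : ℕ) {d : ℕ} (α : ℝ) (γ : Finset (Fin d) → ℝ) (s : ℕ) (hs : s + 1 ≤ d)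
    (z : Fin (s+1) → ℕ) : ℝ :=
  ∑ w ∈ (Finset.univ.filter fun j : Fin d => s + 1 ≤ (j : ℕ)).powerset,
    (2 * zetaR (2*α)) ^ w.card *
      theta n α z (fun u => γ (u.map ⟨Fin.castLE hs, Fin.castLE_injective hs⟩ ∪ w))

/-- `z` is obtained by the component-by-component construction. -/
def IsCBC (n : ℕ) {d : ℕ} (α : ℝ) (γ : Finset (Fin d) → ℝ) (z : Fin d → ℕ) : Prop :=
  (∀ j, z j ∈ Un n) ∧
  ∀ (s : ℕ) (hs : s + 1 ≤ d), ∀ w ∈ Un n,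
    Tcrit n α γ s hs (fun j => z (Fin.castLE hs j)) ≤
      Tcrit n α γ s hs (Fin.snoc (fun j : Fin s => z (Fin.castLE (Nat.le_of_succ_le hs) j)) w)

/-- The quantity `sum(T)` of Lemma 5.1 / (5.3). -/
def SumT (n : ℕ) {d : ℕ} (α : ℝ) (γ : Finset (Fin d) → ℝ) (z : Fin d → ℕ) (M : ℝ) : ℝ :=
  ∑' h : {h : Fin d → ℤ // rK α γ h ≤ M},
    ∑' p : {p : Fin d → ℤ // rK α γ p ≤ M ∧ dotMod n (p - h.1) z},
      ∑' ℓ : {ℓ : Fin d → ℤ // ℓ ≠ 0 ∧ ℓ ≠ p.1 - h.1 ∧ dotMod n ℓ z},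
        1 / rK α γ (h.1 + ℓ.1)

/-! ### Auxiliary lemmas -/

lemma rp_pos {k : ℕ} (α : ℝ) (h : Fin k → ℤ) : 0 < rp α h := by
  apply Finset.prod_pos
  intro j hj
  have hj0 : h j ≠ 0 := by simpa [supp] using hj
  have : (0:ℝ) < |(h j : ℝ)| := abs_pos.mpr (by exact_mod_cast hj0)
  exact Real.rpow_pos_of_pos this α

lemma rp_eq_prod {k : ℕ} (α : ℝ) (h : Fin k → ℤ) :
    rp α h = ∏ j, (if h j = 0 then (1:ℝ) else |(h j : ℝ)| ^ α) := by
  rw [rp, supp, Finset.prod_filter]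
  exact Finset.prod_congr rfl fun j _ => by by_cases hj : h j = 0 <;> simp [hj]

lemma inv_rp_eq {k : ℕ} (α : ℝ) (h : Fin k → ℤ) :
    (rp α h)⁻¹ = ∏ j, (if h j = 0 then (1:ℝ) else |(h j : ℝ)| ^ (-α)) := by
  rw [rp_eq_prod, ← Finset.prod_inv_distrib]
  refine Finset.prod_congr rfl fun j _ => ?_
  by_cases hj : h j = 0
  · simp [hj]
  · simp [hj, Real.rpow_neg (abs_nonneg _)]

lemma summable_gfun {α : ℝ} (hα : 1 < α) :
    Summable fun t : ℤ => if t = 0 then (1:ℝ) else |(t : ℝ)| ^ (-α) := by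
  have h1 := Real.summable_abs_int_rpow hα
  have h2 : Summable fun t : ℤ => if t = 0 then (1:ℝ) else 0 :=
    summable_of_ne_finset_zero (s := ({0} : Finset ℤ)) (by
      intro b hb
      simp only [Finset.mem_singleton] at hb
      simp [hb])
  refine (h1.add h2).congr fun t => ?_
  by_cases ht : t = 0
  · have : -α ≠ 0 := neg_ne_zero.mpr (by linarith)
    simp [ht, Real.zero_rpow this]
  · simp [ht]

lemma gfun_nonneg (α : ℝ) (t : ℤ) :
    0 ≤ if t = 0 then (1:ℝ) else |(t : ℝ)| ^ (-α) := by
  by_cases ht : t = 0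
  · simp [ht]
  · simp only [ht, if_false]
    exact Real.rpow_nonneg (abs_nonneg _) _

lemma summable_pi_prod {g : ℤ → ℝ} (hg : Summable g) (hg0 : ∀ t, 0 ≤ g t) (k : ℕ) :
    Summable fun m : Fin k → ℤ => ∏ j, g (m j) := by
  induction k with
  | zero =>
    haveI : Unique (Fin 0 → ℤ) := ⟨⟨fun i => i.elim0⟩, fun f => funext fun i => i.elim0⟩
    exact Summable.of_finite
  | succ k ih =>
    have h2 : Summable fun p : ℤ × (Fin k → ℤ) => g p.1 * ∏ j, g (p.2 j) :=
      Summable.mul_of_nonneg (f := g) (g := fun m : Fin k → ℤ => ∏ j, g (m j)) hg ih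
        (Pi.le_def.mpr fun t => hg0 t)
        (Pi.le_def.mpr fun m => Finset.prod_nonneg fun j _ => hg0 _)
    rw [← (Fin.consEquiv fun _ : Fin (k+1) => ℤ).summable_iff]
    refine h2.congr fun p => ?_
    simp only [Function.comp_apply, Fin.consEquiv_apply]
    rw [Fin.prod_univ_succ, Fin.cons_zero]
    exact congrArg _ (Finset.prod_congr rfl fun j _ => by rw [Fin.cons_succ])

lemma summable_inv_rp {k : ℕ} {α : ℝ} (hα : 1 < α) :
    Summable fun m : Fin k → ℤ => (rp α m)⁻¹ :=
  (summable_pi_prod (summable_gfun hα) (gfun_nonneg α) k).congr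
    fun m => (inv_rp_eq α m).symm

lemma rK_pos {k : ℕ} {α : ℝ} {γ : Finset (Fin k) → ℝ} (hγpos : ∀ u, 0 < γ u)
    (h : Fin k → ℤ) : 0 < rK α γ h :=
  div_pos (rp_pos α h) (hγpos _)

lemma summable_inv_rK {k : ℕ} {α : ℝ} {γ : Finset (Fin k) → ℝ} (hα : 1 < α)
    (hγpos : ∀ u, 0 < γ u) :
    Summable fun m : Fin k → ℤ => 1 / rK α γ m := by
  have hC : ∀ m : Fin k → ℤ,
      1 / rK α γ m ≤ (∑ u : Finset (Fin k), γ u) * (rp α m)⁻¹ := by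
    intro m
    rw [rK, one_div, inv_div, div_eq_mul_inv]
    have hγle : γ (supp m) ≤ ∑ u : Finset (Fin k), γ u :=
      Finset.single_le_sum (fun u _ => (hγpos u).le) (Finset.mem_univ _)
    exact mul_le_mul_of_nonneg_right hγle (inv_nonneg.mpr (rp_pos α m).le)
  exact Summable.of_nonneg_of_le
    (fun m => (one_div_pos.mpr (rK_pos hγpos m)).le)
    hC ((summable_inv_rp hα).mul_left _)

/-- Lemma 5.4, first bound: `sum(T) ≤ M · |A_d(M)| · S_{n,d,α,γ}(z)`. -/
theorem stmt9 (n d : ℕ) (hn : 2 ≤ n) (hd : 1 ≤ d) (α : ℝ) (hα : 1 < α)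
    (γ : Finset (Fin d) → ℝ) (hγpos : ∀ u, 0 < γ u) (hγ0 : γ ∅ = 1)
    (M : ℝ) (hM : 0 < M) (z : Fin d → ℕ) (hz : ∀ j, z j ∈ Un n) :
    SumT n α γ z M ≤
      M * ({h : Fin d → ℤ | rK α γ h ≤ M}.ncard : ℝ) * Sq n α γ z := by
  classical
  have hrKpos : ∀ m : Fin d → ℤ, 0 < rK α γ m := rK_pos hγpos
  have hq0 : ∀ m : Fin d → ℤ, 0 ≤ 1 / rK α γ m := fun m => (one_div_pos.mpr (hrKpos m)).le
  have hq : Summable fun m : Fin d → ℤ => 1 / rK α γ m := summable_inv_rK hα hγpos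
  have hqh : ∀ h : Fin d → ℤ, Summable fun ℓ : Fin d → ℤ => 1 / rK α γ (h + ℓ) :=
    fun h => hq.comp_injective (add_right_injective h)
  -- the set `A_d(M)` is finite
  have hAfin : ({h : Fin d → ℤ | rK α γ h ≤ M}).Finite := by
    refine (Filter.mem_cofinite.mp
      (hq.tendsto_cofinite_zero (Iio_mem_nhds (one_div_pos.mpr hM)))).subset ?_
    intro h hh
    simp only [Set.mem_compl_iff, Set.mem_preimage, Set.mem_Iio, not_lt]
    exact one_div_le_one_div_of_le (hrKpos h) hh
  haveI instA : Finite {h : Fin d → ℤ // rK α γ h ≤ M} := hAfin.to_subtype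
  have hPfin : ∀ h : Fin d → ℤ,
      ({p : Fin d → ℤ | rK α γ p ≤ M ∧ dotMod n (p - h) z}).Finite :=
    fun h => hAfin.subset fun p hp => hp.1
  have hI0 : ∀ h : Fin d → ℤ,
      0 ≤ ∑' ℓ : {ℓ : Fin d → ℤ // ℓ ≠ 0 ∧ dotMod n ℓ z}, 1 / rK α γ (h + ℓ.1) :=
    fun h => tsum_nonneg fun ℓ => hq0 _
  have hIC0 : ∀ h : Fin d → ℤ,
      (∑' ℓ : {ℓ : Fin d → ℤ // ℓ ≠ 0 ∧ dotMod n ℓ z}, 1 / rK α γ (h + ℓ.1))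
        ≤ ∑' m : Fin d → ℤ, 1 / rK α γ m := by
    intro h
    have h1 := Summable.tsum_subtype_le (fun ℓ : Fin d → ℤ => 1 / rK α γ (h + ℓ))
      {ℓ : Fin d → ℤ | ℓ ≠ 0 ∧ dotMod n ℓ z} (fun ℓ => hq0 _) (hqh h)
    have h2 : (∑' ℓ : Fin d → ℤ, 1 / rK α γ (h + ℓ)) = ∑' m : Fin d → ℤ, 1 / rK α γ m :=
      Equiv.tsum_eq ⟨fun ℓ => h + ℓ, fun m => m - h, fun ℓ => by simp, fun m => by simp⟩
        (fun m => 1 / rK α γ m)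
    exact h1.trans (le_of_eq h2)
  -- dropping the excluded value `ℓ = p - h` only enlarges the sum
  have key1 : ∀ h p : Fin d → ℤ,
      (∑' ℓ : {ℓ : Fin d → ℤ // ℓ ≠ 0 ∧ ℓ ≠ p - h ∧ dotMod n ℓ z}, 1 / rK α γ (h + ℓ.1))
        ≤ ∑' ℓ : {ℓ : Fin d → ℤ // ℓ ≠ 0 ∧ dotMod n ℓ z}, 1 / rK α γ (h + ℓ.1) := by
    intro h p
    have hs := hqh h
    have e1 : (∑' ℓ : {ℓ : Fin d → ℤ // ℓ ≠ 0 ∧ ℓ ≠ p - h ∧ dotMod n ℓ z},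
          1 / rK α γ (h + ℓ.1))
        = ∑' ℓ : Fin d → ℤ,
            ({ℓ : Fin d → ℤ | ℓ ≠ 0 ∧ ℓ ≠ p - h ∧ dotMod n ℓ z}).indicator
              (fun ℓ => 1 / rK α γ (h + ℓ)) ℓ :=
      _root_.tsum_subtype {ℓ : Fin d → ℤ | ℓ ≠ 0 ∧ ℓ ≠ p - h ∧ dotMod n ℓ z}
        (fun ℓ => 1 / rK α γ (h + ℓ))
    have e2 : (∑' ℓ : {ℓ : Fin d → ℤ // ℓ ≠ 0 ∧ dotMod n ℓ z}, 1 / rK α γ (h + ℓ.1))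
        = ∑' ℓ : Fin d → ℤ,
            ({ℓ : Fin d → ℤ | ℓ ≠ 0 ∧ dotMod n ℓ z}).indicator
              (fun ℓ => 1 / rK α γ (h + ℓ)) ℓ :=
      _root_.tsum_subtype {ℓ : Fin d → ℤ | ℓ ≠ 0 ∧ dotMod n ℓ z}
        (fun ℓ => 1 / rK α γ (h + ℓ))
    rw [e1, e2]
    refine Summable.tsum_le_tsum (fun ℓ => ?_) (hs.indicator _) (hs.indicator _)
    refine Set.indicator_le_indicator_of_subset ?_ (fun ℓ => hq0 _) ℓ
    intro ℓ hℓ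
    exact ⟨hℓ.1, hℓ.2.2⟩
  -- the sum over `p` has at most `|A_d(M)|` terms
  have key2 : ∀ h : {h : Fin d → ℤ // rK α γ h ≤ M},
      (∑' p : {p : Fin d → ℤ // rK α γ p ≤ M ∧ dotMod n (p - h.1) z},
        ∑' ℓ : {ℓ : Fin d → ℤ // ℓ ≠ 0 ∧ ℓ ≠ p.1 - h.1 ∧ dotMod n ℓ z},
          1 / rK α γ (h.1 + ℓ.1))
      ≤ ({h : Fin d → ℤ | rK α γ h ≤ M}.ncard : ℝ) *
          ∑' ℓ : {ℓ : Fin d → ℤ // ℓ ≠ 0 ∧ dotMod n ℓ z}, 1 / rK α γ (h.1 + ℓ.1) := by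
    intro h
    haveI : Finite {p : Fin d → ℤ // rK α γ p ≤ M ∧ dotMod n (p - h.1) z} :=
      (hPfin h.1).to_subtype
    have step : (∑' p : {p : Fin d → ℤ // rK α γ p ≤ M ∧ dotMod n (p - h.1) z},
          ∑' ℓ : {ℓ : Fin d → ℤ // ℓ ≠ 0 ∧ ℓ ≠ p.1 - h.1 ∧ dotMod n ℓ z},
            1 / rK α γ (h.1 + ℓ.1))
        ≤ ∑' _p : {p : Fin d → ℤ // rK α γ p ≤ M ∧ dotMod n (p - h.1) z},
            ∑' ℓ : {ℓ : Fin d → ℤ // ℓ ≠ 0 ∧ dotMod n ℓ z}, 1 / rK α γ (h.1 + ℓ.1) :=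
      Summable.tsum_le_tsum (fun p => key1 h.1 p.1) Summable.of_finite Summable.of_finite
    refine step.trans ?_
    rw [tsum_const, nsmul_eq_mul]
    refine mul_le_mul_of_nonneg_right ?_ (hI0 h.1)
    have hcard : Nat.card {p : Fin d → ℤ // rK α γ p ≤ M ∧ dotMod n (p - h.1) z}
        ≤ {h : Fin d → ℤ | rK α γ h ≤ M}.ncard := by
      rw [show Nat.card {p : Fin d → ℤ // rK α γ p ≤ M ∧ dotMod n (p - h.1) z}
          = ({p : Fin d → ℤ | rK α γ p ≤ M ∧ dotMod n (p - h.1) z}).ncard from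
          Nat.card_coe_set_eq _]
      exact Set.ncard_le_ncard (fun p hp => hp.1) hAfin
    exact_mod_cast hcard
  -- summability of the integrand of `Sq`
  have hfb : Summable fun h : Fin d → ℤ =>
      (1 / rK α γ h) * ∑' ℓ : {ℓ : Fin d → ℤ // ℓ ≠ 0 ∧ dotMod n ℓ z},
        1 / rK α γ (h + ℓ.1) := by
    refine Summable.of_nonneg_of_le (fun h => mul_nonneg (hq0 h) (hI0 h)) (fun h => ?_)
      (hq.mul_right (∑' m : Fin d → ℤ, 1 / rK α γ m))
    exact mul_le_mul_of_nonneg_left (hIC0 h) (hq0 h)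
  have hsub : (∑' h : {h : Fin d → ℤ // rK α γ h ≤ M},
        (1 / rK α γ h.1) * ∑' ℓ : {ℓ : Fin d → ℤ // ℓ ≠ 0 ∧ dotMod n ℓ z},
          1 / rK α γ (h.1 + ℓ.1)) ≤ Sq n α γ z :=
    Summable.tsum_subtype_le _ {h : Fin d → ℤ | rK α γ h ≤ M}
      (fun h => mul_nonneg (hq0 h) (hI0 h)) hfb
  calc SumT n α γ z M
      ≤ ∑' h : {h : Fin d → ℤ // rK α γ h ≤ M},
          ({h : Fin d → ℤ | rK α γ h ≤ M}.ncard : ℝ) *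
            ∑' ℓ : {ℓ : Fin d → ℤ // ℓ ≠ 0 ∧ dotMod n ℓ z}, 1 / rK α γ (h.1 + ℓ.1) :=
        Summable.tsum_le_tsum key2 Summable.of_finite Summable.of_finite
    _ ≤ ∑' h : {h : Fin d → ℤ // rK α γ h ≤ M},
          ({h : Fin d → ℤ | rK α γ h ≤ M}.ncard : ℝ) *
            (M * ((1 / rK α γ h.1) *
              ∑' ℓ : {ℓ : Fin d → ℤ // ℓ ≠ 0 ∧ dotMod n ℓ z}, 1 / rK α γ (h.1 + ℓ.1))) := by
        refine Summable.tsum_le_tsum (fun h => ?_) Summable.of_finite Summable.of_finite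
        refine mul_le_mul_of_nonneg_left ?_ (Nat.cast_nonneg _)
        have h2 : 1 / M ≤ 1 / rK α γ h.1 := one_div_le_one_div_of_le (hrKpos h.1) h.2
        have h1 : (1:ℝ) ≤ M * (1 / rK α γ h.1) := by
          calc (1:ℝ) = M * (1/M) := by field_simp
            _ ≤ M * (1 / rK α γ h.1) := mul_le_mul_of_nonneg_left h2 hM.le
        calc (∑' ℓ : {ℓ : Fin d → ℤ // ℓ ≠ 0 ∧ dotMod n ℓ z}, 1 / rK α γ (h.1 + ℓ.1))
            = 1 * ∑' ℓ : {ℓ : Fin d → ℤ // ℓ ≠ 0 ∧ dotMod n ℓ z}, 1 / rK α γ (h.1 + ℓ.1) :=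
              (one_mul _).symm
          _ ≤ (M * (1 / rK α γ h.1)) *
                ∑' ℓ : {ℓ : Fin d → ℤ // ℓ ≠ 0 ∧ dotMod n ℓ z}, 1 / rK α γ (h.1 + ℓ.1) :=
              mul_le_mul_of_nonneg_right h1 (hI0 h.1)
          _ = M * ((1 / rK α γ h.1) *
                ∑' ℓ : {ℓ : Fin d → ℤ // ℓ ≠ 0 ∧ dotMod n ℓ z}, 1 / rK α γ (h.1 + ℓ.1)) := by
              ring
    _ = ({h : Fin d → ℤ | rK α γ h ≤ M}.ncard : ℝ) *
          (M * ∑' h : {h : Fin d → ℤ // rK α γ h ≤ M},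
            (1 / rK α γ h.1) *
              ∑' ℓ : {ℓ : Fin d → ℤ // ℓ ≠ 0 ∧ dotMod n ℓ z}, 1 / rK α γ (h.1 + ℓ.1)) := by
        rw [tsum_mul_left, tsum_mul_left]
    _ ≤ ({h : Fin d → ℤ | rK α γ h ≤ M}.ncard : ℝ) * (M * Sq n α γ z) :=
        mul_le_mul_of_nonneg_left (mul_le_mul_of_nonneg_left hsub hM.le) (Nat.cast_nonneg _)
    _ = M * ({h : Fin d → ℤ | rK α γ h ≤ M}.ncard : ℝ) * Sq n α γ z := by ring

end
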